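/- arXiv:0906.4591 — 5 statements merged into one kernel-verified Lean document; each statement's English description precedes it below -/
import Mathlib

section
/- For real q > 0 and every natural number n ≥ 1, the sum ∑_{k=0}^{n} (-1)^{n-k} binom(q, n-k) · binom(q+k-1, k) / (q+k+1) equals - q·Γ(n+1)·Γ(q+1) / Γ(q+n+2), where binom(x,k) = Γ(x+1)/(Γ(k+1)Γ(x-k+1)) denotes the generalized binomial coefficient. -/
/-- Generalized binomial coefficient `x (x-1) ⋯ (x-k+1) / k!` for real `x`. -/
noncomputable def gbinom (x : ℝ) (k : ℕ) : ℝ :=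
  (∏ i ∈ Finset.range k, (x - i)) / (Nat.factorial k)

/-!
Since `binom(q+k-1, k) = (-1)^k binom(-q, k)`, the numerators of `c_n` are `(-1)^n` times the
Chu–Vandermonde convolution of `binom(q, ·)` and `binom(-q, ·)`, so they sum to `binom(0, n) = 0`
for `n ≥ 1`. Writing `(q+n+2)/(q+k+1) = 1 + (n+1-k)/(q+k+1)` and using
`(n+1-k) binom(q, n+1-k) = (q-n+k) binom(q, n-k)`, this vanishing twice gives the recurrence
`(q+n+2) c_{n+1} = (n+1) c_n`. The Gamma expression obeys the same recurrence and agrees with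
`c_1 = -q/((q+1)(q+2))`.
-/

open Finset Polynomial

theorem gbinom_eq_choose (x : ℝ) (k : ℕ) : gbinom x k = Ring.choose x k := by
  rw [Ring.choose_eq_smul, ← aeval_eq_smeval, aeval_def, eval₂_eq_eval_map, descPochhammer_map,
    descPochhammer_eval_eq_prod_range, gbinom, smul_eq_mul, div_eq_inv_mul]

theorem gbinom_add_sub_one (x : ℝ) (k : ℕ) :
    gbinom (x + k - 1) k = (-1) ^ k * gbinom (-x) k := by
  rw [gbinom_eq_choose, gbinom_eq_choose, Ring.choose_neg, Units.smul_def,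
    Int.coe_negOnePow_natCast, zsmul_eq_mul, ← mul_assoc]
  push_cast
  rw [← mul_pow, neg_one_mul, neg_neg, one_pow, one_mul]

theorem gbinom_add_eq_sum (x y : ℝ) (n : ℕ) :
    gbinom (x + y) n = ∑ k ∈ range (n + 1), gbinom x (n - k) * gbinom y k := by
  rw [gbinom_eq_choose, Ring.add_choose_eq n (Commute.all x y),
    ← Nat.sum_antidiagonal_eq_sum_range_succ (fun i j => gbinom x j * gbinom y i),
    ← Nat.sum_antidiagonal_swap]
  simp [gbinom_eq_choose]

theorem succ_mul_gbinom_succ (x : ℝ) (k : ℕ) :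
    (k + 1) * gbinom x (k + 1) = (x - k) * gbinom x k := by
  simp only [gbinom, prod_range_succ, Nat.factorial_succ, Nat.cast_mul]
  field_simp
  push_cast
  ring

noncomputable def cnTerm (q : ℝ) (n k : ℕ) : ℝ :=
  (-1) ^ (n - k) * gbinom q (n - k) * gbinom (q + k - 1) k

theorem sum_cnTerm_eq_zero (q : ℝ) {n : ℕ} (hn : 0 < n) :
    ∑ k ∈ range (n + 1), cnTerm q n k = 0 := by
  have hterm : ∀ k ∈ range (n + 1),
      cnTerm q n k = (-1) ^ n * (gbinom q (n - k) * gbinom (-q) k) := by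
    intro k hk
    rw [cnTerm, gbinom_add_sub_one, ← pow_sub_mul_pow (-1 : ℝ) (mem_range_succ_iff.mp hk)]
    ring
  rw [sum_congr rfl hterm, ← mul_sum, ← gbinom_add_eq_sum, add_neg_cancel, gbinom_eq_choose,
    Ring.choose_zero_pos ℝ hn, mul_zero]

theorem succ_sub_mul_cnTerm_succ (q : ℝ) {n k : ℕ} (hk : k ≤ n) :
    ((n : ℝ) + 1 - k) * cnTerm q (n + 1) k = ((n : ℝ) + 1 - (q + k + 1)) * cnTerm q n k := by
  obtain ⟨j, rfl⟩ := Nat.exists_eq_add_of_le' hk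
  have hsucc := succ_mul_gbinom_succ q j
  simp only [cnTerm, Nat.add_right_comm j k 1, Nat.add_sub_cancel, pow_succ] at hsucc ⊢
  push_cast
  linear_combination (-(-1 : ℝ) ^ j * gbinom (q + k - 1) k) * hsucc

noncomputable def cn (q : ℝ) (n : ℕ) : ℝ :=
  ∑ k ∈ range (n + 1), cnTerm q n k / (q + k + 1)

theorem cn_succ {q : ℝ} (hq : -1 < q) {n : ℕ} (hn : 0 < n) :
    (q + n + 2) * cn q (n + 1) = (n + 1) * cn q n := by
  have hden (k : ℕ) : q + k + 1 ≠ 0 := by have := k.cast_nonneg (α := ℝ); linarith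
  calc (q + n + 2) * cn q (n + 1)
      = ∑ k ∈ range (n + 1 + 1), (cnTerm q (n + 1) k
          + ((n : ℝ) + 1 - k) * cnTerm q (n + 1) k / (q + k + 1)) := by
        rw [cn, mul_sum]
        refine sum_congr rfl fun k _ => ?_
        field_simp [hden k]
        ring
    _ = ∑ k ∈ range (n + 1), ((n : ℝ) + 1 - k) * cnTerm q (n + 1) k / (q + k + 1) := by
        rw [sum_add_distrib, sum_cnTerm_eq_zero q n.succ_pos, zero_add, sum_range_succ]
        push_cast
        ring
    _ = ∑ k ∈ range (n + 1), ((n + 1) * (cnTerm q n k / (q + k + 1)) - cnTerm q n k) := by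
        refine sum_congr rfl fun k hk => ?_
        rw [succ_sub_mul_cnTerm_succ q (mem_range_succ_iff.mp hk)]
        field_simp [hden k]
    _ = (n + 1) * cn q n := by
        rw [sum_sub_distrib, sum_cnTerm_eq_zero q hn, sub_zero, ← mul_sum, cn]

theorem cn_one {q : ℝ} (hq : -1 < q) : cn q 1 = -q / ((q + 1) * (q + 2)) := by
  have h1 : q + 1 ≠ 0 := by linarith
  have h2 : q + 2 ≠ 0 := by linarith
  have hsum : cn q 1 = -q / (q + 1) + q / (q + 2) := by
    norm_num [cn, cnTerm, gbinom, sum_range_succ, add_assoc]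
  rw [hsum]
  field_simp
  ring

theorem cn_closed_form (q : ℝ) (hq : 0 < q) (n : ℕ) (hn : 1 ≤ n) :
    ∑ k ∈ Finset.range (n + 1),
        (-1 : ℝ) ^ (n - k) * gbinom q (n - k) * gbinom (q + k - 1) k / (q + k + 1)
      = - q * Real.Gamma (n + 1) * Real.Gamma (q + 1) / Real.Gamma (q + n + 2) := by
  change cn q n = _
  induction n, hn using Nat.le_induction with
  | base =>
    have hΓ : Real.Gamma (q + 1 + 2) = (q + 2) * ((q + 1) * Real.Gamma (q + 1)) := by
      rw [show q + 1 + 2 = q + 2 + 1 by ring, Real.Gamma_add_one (by positivity),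
        show q + 2 = q + 1 + 1 by ring, Real.Gamma_add_one (by positivity)]
    have hΓq : Real.Gamma (q + 1) ≠ 0 := (Real.Gamma_pos_of_pos (by positivity)).ne'
    rw [cn_one (by linarith), Nat.cast_one, one_add_one_eq_two, Real.Gamma_two, hΓ]
    field_simp
  | succ m hm ih =>
    have hm2 : q + m + 2 ≠ 0 := by positivity
    have hstep : cn q (m + 1) = (m + 1) / (q + m + 2) * cn q m := by
      rw [div_mul_eq_mul_div, eq_div_iff hm2, ← cn_succ (by linarith) hm]
      ring
    rw [hstep, ih]
    push_cast
    rw [Real.Gamma_add_one (by positivity : (m : ℝ) + 1 ≠ 0),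
      show q + (m + 1) + 2 = q + m + 2 + 1 by ring, Real.Gamma_add_one hm2]
    have : Real.Gamma (q + m + 2) ≠ 0 := (Real.Gamma_pos_of_pos (by positivity)).ne'
    field_simp
end

section
/- For any real x > 0 with x ≠ 1 and any natural number k ≥ 0, the finite sum ∑_{j=0}^{k} Γ(x+1)Γ(j+1)/Γ(x+j+1) equals (x/(x-1)) · (1 - Γ(x)Γ(k+2)/Γ(x+k+1)). -/
/-!
With `f j = Γ(x) Γ(j+1) / Γ(x+j)`, the recurrence `Γ(s+1) = s Γ(s)` gives
`f (j+1) - f j = (1 - x)/x · Γ(x+1) Γ(j+1) / Γ(x+j+1)`, so the sum telescopes to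
`x/(1-x) · (f (k+1) - f 0)` with `f 0 = 1`.
-/

namespace Real

variable {x : ℝ}

lemma add_natCast_ne_zero (hx : ∀ n : ℕ, x ≠ -n) (j : ℕ) : x + j ≠ 0 :=
  fun h => hx j (by linarith)

lemma Gamma_add_natCast_ne_zero (hx : ∀ n : ℕ, x ≠ -n) (j : ℕ) : Gamma (x + j) ≠ 0 :=
  Gamma_ne_zero fun m h => hx (m + j) (by push_cast; linarith)

lemma one_sub_mul_Gamma_mul_Gamma_div (hx : ∀ n : ℕ, x ≠ -n) (j : ℕ) :
    (1 - x) * (Gamma (x + 1) * Gamma (j + 1) / Gamma (x + j + 1)) =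
      x * (Gamma x * Gamma (j + 2) / Gamma (x + j + 1) - Gamma x * Gamma (j + 1) / Gamma (x + j)) := by
  have hx0 : x ≠ 0 := by simpa using add_natCast_ne_zero hx 0
  have hxj := add_natCast_ne_zero hx j
  have hΓxj := Gamma_add_natCast_ne_zero hx j
  have hj2 : Gamma ((j : ℝ) + 2) = (j + 1) * Gamma (j + 1) := by
    rw [← Gamma_add_one (by positivity)]; ring_nf
  rw [Gamma_add_one hx0, Gamma_add_one hxj, hj2]
  field_simp
  ring

lemma one_sub_mul_sum_Gamma_mul_Gamma_div (hx : ∀ n : ℕ, x ≠ -n) (k : ℕ) :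
    (1 - x) * ∑ j ∈ Finset.range (k + 1), Gamma (x + 1) * Gamma (j + 1) / Gamma (x + j + 1) =
      x * (Gamma x * Gamma (k + 2) / Gamma (x + k + 1) - 1) := by
  have hΓx : Gamma x ≠ 0 := by simpa using Gamma_add_natCast_ne_zero hx 0
  induction k with
  | zero => simpa [div_self hΓx] using one_sub_mul_Gamma_mul_Gamma_div hx 0
  | succ k ih =>
    rw [Finset.sum_range_succ, mul_add, ih, one_sub_mul_Gamma_mul_Gamma_div hx]
    push_cast
    ring_nf

end Real

theorem gamma_finite_sum (x : ℝ) (hx : 0 < x) (hx1 : x ≠ 1) (k : ℕ) :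
    ∑ j ∈ Finset.range (k + 1),
        Real.Gamma (x + 1) * Real.Gamma (j + 1) / Real.Gamma (x + j + 1)
      = x / (x - 1) * (1 - Real.Gamma x * Real.Gamma (k + 2) / Real.Gamma (x + k + 1)) := by
  have hx_ne : ∀ n : ℕ, x ≠ -n := fun n h => by linarith [n.cast_nonneg (α := ℝ)]
  have h1x : 1 - x ≠ 0 := sub_ne_zero.mpr hx1.symm
  rw [← mul_right_inj' h1x, Real.one_sub_mul_sum_Gamma_mul_Gamma_div hx_ne]
  field_simp [sub_ne_zero.mpr hx1]
  ring
end

section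
/- For any real x > 1, the infinite series ∑_{j=0}^{∞} Γ(x+1)Γ(j+1)/Γ(x+j+1) converges and its sum equals x/(x-1). -/
/-!
With `a n = n! / Γ(x + n)`, the recurrence `Γ(s + 1) = s Γ(s)` gives
`a j - a (j + 1) = (x - 1) · j! / Γ(x + j + 1)`, so the series telescopes to
`Γ(x + 1) a 0 / (x - 1) = x / (x - 1)`, provided `a n → 0`.  By Euler's limit formula
`a n ~ n ^ (1 - x)`, which tends to `0` because `x > 1`.
-/

open Filter Topology Nat

theorem hasSum_sub_succ_of_antitone {f : ℕ → ℝ} {l : ℝ} (hf : Antitone f)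
    (hl : Tendsto f atTop (𝓝 l)) : HasSum (fun n => f n - f (n + 1)) (f 0 - l) := by
  refine (hasSum_iff_tendsto_nat_of_nonneg (fun n => sub_nonneg.2 (hf n.le_succ)) _).2 ?_
  simpa only [Finset.sum_range_sub'] using tendsto_const_nhds.sub hl

namespace Real

theorem Gamma_add_nat_eq_mul_prod {x : ℝ} (hx : ∀ k : ℕ, x ≠ -k) (n : ℕ) :
    Gamma (x + n) = Gamma x * ∏ k ∈ Finset.range n, (x + k) := by
  induction n with
  | zero => simp
  | succ n ih =>
    have hne : x + n ≠ 0 := fun h => hx n (by linarith)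
    rw [Nat.cast_succ, ← add_assoc, Gamma_add_one hne, ih, Finset.prod_range_succ]
    ring

theorem GammaSeq_eq_factorial_div_Gamma_add_nat {x : ℝ} (hx : ∀ k : ℕ, x ≠ -k) (n : ℕ) :
    GammaSeq x n = n ^ x * n ! * Gamma x / (Gamma (x + n) * (x + n)) := by
  have hΓ : Gamma x ≠ 0 := Gamma_ne_zero hx
  rw [GammaSeq, Finset.prod_range_succ, Gamma_add_nat_eq_mul_prod hx]
  field_simp

theorem tendsto_add_nat_div_rpow_atTop {x : ℝ} (hx : 1 < x) :
    Tendsto (fun n : ℕ => (x + n) / (n : ℝ) ^ x) atTop (𝓝 0) := by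
  have hlim : Tendsto (fun y : ℝ => x * y ^ (-x) + y ^ (-(x - 1))) atTop (𝓝 0) := by
    have := ((tendsto_rpow_neg_atTop (by linarith : 0 < x)).const_mul x).add
      (tendsto_rpow_neg_atTop (by linarith : 0 < x - 1))
    rwa [mul_zero, add_zero] at this
  refine (hlim.comp tendsto_natCast_atTop_atTop).congr' ?_
  filter_upwards [eventually_gt_atTop 0] with n hn
  have hn : (0 : ℝ) < n := by exact_mod_cast hn
  have : 0 < (n : ℝ) ^ x := rpow_pos_of_pos hn x
  simp only [Function.comp_apply]
  rw [rpow_neg hn.le, rpow_neg hn.le, rpow_sub hn, rpow_one]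
  field_simp

theorem tendsto_factorial_div_Gamma_add_nat {x : ℝ} (hx : 1 < x) :
    Tendsto (fun n : ℕ => n ! / Gamma (x + n)) atTop (𝓝 0) := by
  have hx' : ∀ k : ℕ, x ≠ -k := fun k => by linarith [k.cast_nonneg (α := ℝ)]
  have hΓ : 0 < Gamma x := Gamma_pos_of_pos (by linarith)
  have hlim := ((GammaSeq_tendsto_Gamma x).mul (tendsto_add_nat_div_rpow_atTop hx)).div_const
    (Gamma x)
  rw [mul_zero, zero_div] at hlim
  refine hlim.congr' ?_
  filter_upwards [eventually_gt_atTop 0] with n hn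
  have hn : (0 : ℝ) < n := by exact_mod_cast hn
  have : 0 < Gamma (x + n) := Gamma_pos_of_pos (by linarith)
  have : 0 < (n : ℝ) ^ x := rpow_pos_of_pos hn x
  rw [GammaSeq_eq_factorial_div_Gamma_add_nat hx']
  field_simp

theorem factorial_div_Gamma_sub_succ {x : ℝ} {j : ℕ} (hx : x + j ≠ 0) :
    j ! / Gamma (x + j) - (j + 1)! / Gamma (x + (j + 1 : ℕ)) =
      (x - 1) * (j ! / Gamma (x + j + 1)) := by
  rw [Nat.cast_succ, ← add_assoc, Gamma_add_one hx, Nat.factorial_succ]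
  rcases eq_or_ne (Gamma (x + j)) 0 with h | h
  · simp [h]
  · push_cast
    field_simp
    ring

end Real

open Real in
theorem gamma_series_sum (x : ℝ) (hx : 1 < x) :
    HasSum (fun j : ℕ => Real.Gamma (x + 1) * Real.Gamma (j + 1) / Real.Gamma (x + j + 1))
      (x / (x - 1)) := by
  have hx0 : 0 < x := by linarith
  set a : ℕ → ℝ := fun n => n ! / Gamma (x + n)
  have hdiff (j : ℕ) : a j - a (j + 1) = (x - 1) * (j ! / Gamma (x + j + 1)) :=
    factorial_div_Gamma_sub_succ (by positivity)
  have hanti : Antitone a := antitone_nat_of_succ_le fun j =>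
    sub_nonneg.1 <| (hdiff j).symm ▸ mul_nonneg (by linarith) (by positivity)
  have hsum := (hasSum_sub_succ_of_antitone hanti
    (tendsto_factorial_div_Gamma_add_nat hx)).mul_left (Gamma (x + 1) / (x - 1))
  have hx1 : x - 1 ≠ 0 := by linarith
  have hΓ : Gamma x ≠ 0 := (Gamma_pos_of_pos hx0).ne'
  have hterm (j : ℕ) : Gamma (x + 1) * Gamma (j + 1) / Gamma (x + j + 1) =
      Gamma (x + 1) / (x - 1) * (a j - a (j + 1)) := by
    rw [hdiff, Gamma_nat_eq_factorial]
    field_simp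
  have hlimit : Gamma (x + 1) / (x - 1) * (a 0 - 0) = x / (x - 1) := by
    simp only [a, Nat.factorial_zero, Nat.cast_one, Nat.cast_zero, add_zero, sub_zero,
      Gamma_add_one hx0.ne']
    field_simp
  simpa only [hterm, hlimit] using hsum
end

section
/- For real q > 0, with d_k = Γ(q+1)Γ(k+2)/Γ(q+k+2), the infinite series ∑_{k=0}^{∞} d_k/(k+1) converges and equals 1/q. -/
/-!
Writing `B(a, b) = Γ(a) Γ(b) / Γ(a + b)`, the `k`-th term of the series is `B(q + 1, k + 1)`.
The recurrence `B(a + 1, b) + B(a, b + 1) = B(a, b)` (from `Γ(x + 1) = x Γ(x)`) makes the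
series telescope: its partial sums are `B(q, 1) - B(q, n + 1) = 1 / q - B(q, n + 1)`, and
`B(q, n + 1) = n! / (q (q + 1) ⋯ (q + n))` tends to `0` because it is `n ^ (-q)` times the
`n`-th term of Gauss's product formula for `Γ(q)`.
-/

open Filter Topology ProbabilityTheory

theorem hasSum_sub_succ_of_tendsto {f : ℕ → ℝ} {l : ℝ} (hf : ∀ n, f (n + 1) ≤ f n)
    (hl : Tendsto f atTop (𝓝 l)) : HasSum (fun n => f n - f (n + 1)) (f 0 - l) := by
  rw [hasSum_iff_tendsto_nat_of_nonneg fun n => sub_nonneg.2 (hf n)]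
  simp only [Finset.sum_range_sub']
  exact tendsto_const_nhds.sub hl

namespace Real

theorem Gamma_add_nat_add_one {a : ℝ} (ha : ∀ j : ℕ, a + j ≠ 0) (n : ℕ) :
    Gamma (a + n + 1) = Gamma a * ∏ j ∈ Finset.range (n + 1), (a + j) := by
  induction n with
  | zero => simp [Gamma_add_one (by simpa using ha 0), mul_comm]
  | succ n ih =>
    have hn : a + n + 1 ≠ 0 := by simpa [add_assoc] using ha (n + 1)
    rw [Finset.prod_range_succ, Nat.cast_succ, ← add_assoc, Gamma_add_one hn, ih]
    ring

end Real

theorem beta_eq_Gamma_mul_Gamma_add_one_div {b : ℝ} (a : ℝ) (hb : b ≠ 0) :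
    beta a b = Real.Gamma a * Real.Gamma (b + 1) / Real.Gamma (a + b) / b := by
  rw [beta, Real.Gamma_add_one hb]
  field_simp

theorem beta_add_one_left_add_beta_add_one_right {a b : ℝ} (ha : 0 < a) (hb : 0 < b) :
    beta (a + 1) b + beta a (b + 1) = beta a b := by
  have hab : a + 1 + b = a + b + 1 := by ring
  have hab' : a + (b + 1) = a + b + 1 := by ring
  have hΓ : Real.Gamma (a + b) ≠ 0 := (Real.Gamma_pos_of_pos (by positivity)).ne'
  simp only [beta, hab, hab', Real.Gamma_add_one ha.ne', Real.Gamma_add_one hb.ne',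
    Real.Gamma_add_one (by positivity : a + b ≠ 0)]
  field_simp

theorem beta_one_right {a : ℝ} (ha : 0 < a) : beta a 1 = 1 / a := by
  have hΓ : Real.Gamma a ≠ 0 := (Real.Gamma_pos_of_pos ha).ne'
  rw [beta, Real.Gamma_one, Real.Gamma_add_one ha.ne']
  field_simp

theorem beta_nat_add_one_right_eq_GammaSeq {a : ℝ} (ha : 0 < a) {n : ℕ} (hn : n ≠ 0) :
    beta a (n + 1) = Real.GammaSeq a n * (n : ℝ) ^ (-a) := by
  have hn' : (0 : ℝ) < n := by positivity
  have hΓ : Real.Gamma a ≠ 0 := (Real.Gamma_pos_of_pos ha).ne'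
  have hpow : (n : ℝ) ^ a ≠ 0 := by positivity
  have hprod : ∏ j ∈ Finset.range (n + 1), (a + j) ≠ 0 :=
    Finset.prod_ne_zero_iff.2 fun j _ => by positivity
  rw [beta, ← add_assoc, Real.Gamma_add_nat_add_one (fun j => by positivity),
    Real.Gamma_nat_eq_factorial, Real.GammaSeq, Real.rpow_neg hn'.le]
  field_simp

theorem tendsto_beta_nat_add_one_right {a : ℝ} (ha : 0 < a) :
    Tendsto (fun n : ℕ => beta a (n + 1)) atTop (𝓝 0) := by
  have hlim : Tendsto (fun n : ℕ => Real.GammaSeq a n * (n : ℝ) ^ (-a)) atTop (𝓝 0) := by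
    simpa using (Real.GammaSeq_tendsto_Gamma a).mul
      ((tendsto_rpow_neg_atTop ha).comp tendsto_natCast_atTop_atTop)
  refine hlim.congr' ?_
  filter_upwards [eventually_ne_atTop 0] with n hn
  exact (beta_nat_add_one_right_eq_GammaSeq ha hn).symm

theorem dk_over_k_sum (q : ℝ) (hq : 0 < q) :
    HasSum
      (fun k : ℕ =>
        (Real.Gamma (q + 1) * Real.Gamma ((k : ℝ) + 2) / Real.Gamma (q + (k : ℝ) + 2))
          / ((k : ℝ) + 1))
      (1 / q) := by
  have hterm : ∀ k : ℕ,
      (Real.Gamma (q + 1) * Real.Gamma ((k : ℝ) + 2) / Real.Gamma (q + (k : ℝ) + 2))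
        / ((k : ℝ) + 1) = beta (q + 1) (k + 1) := fun k => by
    rw [beta_eq_Gamma_mul_Gamma_add_one_div _ (by positivity)]
    ring_nf
  have hstep : ∀ n : ℕ, beta q (n + 1) - beta q ((n + 1 : ℕ) + 1) = beta (q + 1) (n + 1) :=
    fun n => by
      rw [Nat.cast_succ, sub_eq_iff_eq_add,
        beta_add_one_left_add_beta_add_one_right hq (by positivity)]
  have hanti : ∀ n : ℕ, beta q ((n + 1 : ℕ) + 1) ≤ beta q (n + 1) := fun n =>
    sub_nonneg.1 ((hstep n).symm ▸ (beta_pos (by positivity) (by positivity)).le)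
  have hsum := hasSum_sub_succ_of_tendsto hanti (tendsto_beta_nat_add_one_right hq)
  simpa only [hstep, hterm, Nat.cast_zero, zero_add, beta_one_right hq, sub_zero] using hsum
end

section
/- For real q > 1 and small h ∈ (0, 1/2), with u_1(w) = q·w·∑_{k=0}^∞ c_k w^k where c_0 = 1/(q+1) and c_k = -q·Γ(k+1)Γ(q+1)/Γ(q+k+2) for k ≥ 1, one has ∫_h^{1-h} u_1(w)/w² dw = -(q/(q+1))·log h - q²/(q+1)² + O(h) as h → 0. -/
/-!
On `(0, 1)` the integrand is `q c₀ / w + q ∑ₙ c_{n+1} wⁿ`, so the integral equals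
`q c₀ (log (1 - h) - log h) + q (P (1 - h) - P h)` with `P x = ∑ₙ c_{n+1} x^{n+1} / (n + 1)`.
Since `|c_{n+1}| = q B(n + 2, q + 1)` is summable, `P` is Lipschitz on `[-1, 1]`, so replacing
`P (1 - h)` by `P 1` and `P h` by `P 0 = 0` costs `O(h)`, as does dropping `log (1 - h)`.
The constant comes from `c_{n+1} / (n + 1) = -q / (q + 1) · B(n + 1, q + 2)` and the telescoping
identity `B(x, y + 1) = B(x, y) - B(x + 1, y)`, which give `P 1 = -q / (q + 1)²`.
-/

open Asymptotics Real Filter Topology Set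

noncomputable def realBeta (a b : ℝ) : ℝ := Gamma a * Gamma b / Gamma (a + b)

section Beta

variable {a b : ℝ}

lemma realBeta_pos (ha : 0 < a) (hb : 0 < b) : 0 < realBeta a b := by
  unfold realBeta; positivity

lemma realBeta_add_one_right (ha : 0 < a) (hb : 0 < b) :
    realBeta a (b + 1) = b / (a + b) * realBeta a b := by
  have : Gamma (a + b) ≠ 0 := by positivity
  rw [realBeta, realBeta, Gamma_add_one hb.ne', ← add_assoc, Gamma_add_one (by positivity)]
  field_simp

lemma realBeta_add_one_left (ha : 0 < a) (hb : 0 < b) :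
    realBeta (a + 1) b = realBeta a b - realBeta a (b + 1) := by
  have : Gamma (a + b) ≠ 0 := by positivity
  rw [realBeta_add_one_right ha hb, realBeta, realBeta, add_right_comm,
    Gamma_add_one ha.ne', Gamma_add_one (by positivity)]
  field_simp
  ring

lemma sum_range_realBeta_add_nat (ha : 0 < a) (hb : 0 < b) (n : ℕ) :
    ∑ i ∈ Finset.range n, realBeta (a + i) (b + 1) = realBeta a b - realBeta (a + n) b := by
  have step (i : ℕ) :
      realBeta (a + i) (b + 1) = realBeta (a + i) b - realBeta (a + ↑(i + 1)) b := by
    rw [Nat.cast_succ, ← add_assoc, realBeta_add_one_left (by positivity) hb]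
    ring
  simp only [step, Finset.sum_range_sub', Nat.cast_zero, add_zero]

lemma realBeta_add_nat_le (ha : 0 < a) (hb : 0 < b) (n : ℕ) :
    realBeta (a + n) b ≤ realBeta a b := by
  have hsum := sum_range_realBeta_add_nat ha hb n
  have hnonneg : 0 ≤ ∑ i ∈ Finset.range n, realBeta (a + i) (b + 1) :=
    Finset.sum_nonneg fun i _ => (realBeta_pos (by positivity) (by positivity)).le
  linarith

lemma summable_realBeta_add_nat (ha : 0 < a) (hb : 0 < b) :
    Summable fun n : ℕ => realBeta (a + n) (b + 1) :=
  summable_of_sum_range_le (c := realBeta a b)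
    (fun _ => (realBeta_pos (by positivity) (by positivity)).le) fun n => by
      rw [sum_range_realBeta_add_nat ha hb]
      linarith [realBeta_pos (a := a + n) (by positivity) hb]

lemma tendsto_realBeta_add_nat (ha : 0 < a) (hb : 0 < b) :
    Tendsto (fun n : ℕ => realBeta (a + n) (b + 1)) atTop (𝓝 0) := by
  have hbound (n : ℕ) : realBeta (a + n) (b + 1) ≤ b * realBeta a b / (a + b + n) := by
    rw [realBeta_add_one_right (by positivity) hb, div_mul_eq_mul_div, add_right_comm]
    gcongr
    exact realBeta_add_nat_le ha hb n
  refine squeeze_zero (fun _ => (realBeta_pos (by positivity) (by positivity)).le) hbound ?_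
  exact tendsto_const_nhds.div_atTop (tendsto_atTop_add_const_left _ _ tendsto_natCast_atTop_atTop)

lemma hasSum_realBeta_add_nat (ha : 0 < a) (hb : 0 < b) :
    HasSum (fun n : ℕ => realBeta (a + n) (b + 2)) (realBeta a (b + 1)) := by
  rw [hasSum_iff_tendsto_nat_of_nonneg fun _ => (realBeta_pos (by positivity) (by positivity)).le]
  have hsum := sum_range_realBeta_add_nat ha (by positivity : 0 < b + 1)
  rw [add_assoc, one_add_one_eq_two] at hsum
  simpa only [hsum, sub_zero] using tendsto_const_nhds.sub (tendsto_realBeta_add_nat ha hb)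

end Beta

lemma abs_mul_pow_le_abs {c x : ℝ} (hx : |x| ≤ 1) (k : ℕ) : |c * x ^ k| ≤ |c| := by
  rw [abs_mul, abs_pow]
  exact mul_le_of_le_one_right (abs_nonneg c) (pow_le_one₀ (abs_nonneg x) hx)

lemma abs_div_nat_succ_le (c : ℝ) (n : ℕ) : |c / (n + 1)| ≤ |c| := by
  rw [abs_div]
  exact div_le_self (abs_nonneg c)
    (by rw [abs_of_pos (by positivity)]; linarith [n.cast_nonneg (α := ℝ)])

noncomputable def seriesPrimitive (a : ℕ → ℝ) (x : ℝ) : ℝ := ∑' n : ℕ, a n / (n + 1) * x ^ (n + 1)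

section PowerSeries

variable {a : ℕ → ℝ}

lemma summable_seriesPrimitive (ha : Summable fun n => |a n|) {x : ℝ} (hx : |x| ≤ 1) :
    Summable fun n : ℕ => a n / (n + 1) * x ^ (n + 1) :=
  ha.of_norm_bounded fun n => (abs_mul_pow_le_abs hx _).trans (abs_div_nat_succ_le _ n)

@[simp]
lemma seriesPrimitive_zero : seriesPrimitive a 0 = 0 := by
  simp [seriesPrimitive]

lemma hasDerivAt_seriesPrimitive (ha : Summable fun n => |a n|) {x : ℝ} (hx : x ∈ Ioo (-1) 1) :
    HasDerivAt (seriesPrimitive a) (∑' n, a n * x ^ n) x := by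
  refine hasDerivAt_tsum_of_isPreconnected (g := fun n y => a n / (n + 1) * y ^ (n + 1)) ha
    isOpen_Ioo isPreconnected_Ioo (fun n y _ => ?_)
    (fun n y hy => abs_mul_pow_le_abs (abs_le.2 ⟨hy.1.le, hy.2.le⟩) n)
    (⟨by norm_num, by norm_num⟩ : (0 : ℝ) ∈ Ioo (-1) 1) (by simp) hx
  have hn : (n + 1 : ℝ) ≠ 0 := by positivity
  refine ((hasDerivAt_pow (n + 1) y).const_mul (a n / (n + 1))).congr_deriv ?_
  push_cast
  field_simp

lemma continuousOn_tsum_mul_pow (ha : Summable fun n => |a n|) :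
    ContinuousOn (fun x => ∑' n, a n * x ^ n) (Icc (-1) 1) :=
  continuousOn_tsum (fun n => (continuous_const.mul (continuous_pow n)).continuousOn) ha
    fun n _ hx => abs_mul_pow_le_abs (abs_le.2 hx) n

lemma abs_seriesPrimitive_sub_le (ha : Summable fun n => |a n|) {x y : ℝ} (hx : |x| ≤ 1)
    (hy : |y| ≤ 1) :
    |seriesPrimitive a x - seriesPrimitive a y| ≤ (∑' n, |a n|) * |x - y| := by
  have hterm (n : ℕ) :
      ‖a n / (n + 1) * x ^ (n + 1) - a n / (n + 1) * y ^ (n + 1)‖ ≤ |a n| * |x - y| := by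
    have hpow : |x ^ (n + 1) - y ^ (n + 1)| ≤ |x - y| * (n + 1) := by
      calc |x ^ (n + 1) - y ^ (n + 1)| ≤ |x - y| * ↑(n + 1) * max |x| |y| ^ n :=
            abs_pow_sub_pow_le ..
        _ ≤ |x - y| * ↑(n + 1) := mul_le_of_le_one_right (by positivity)
            (pow_le_one₀ (by positivity) (max_le hx hy))
        _ = |x - y| * (n + 1) := by push_cast; ring
    rw [Real.norm_eq_abs, ← mul_sub, abs_mul, abs_div,
      abs_of_pos (by positivity : (0 : ℝ) < n + 1)]
    calc |a n| / (n + 1) * |x ^ (n + 1) - y ^ (n + 1)|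
        ≤ |a n| / (n + 1) * (|x - y| * (n + 1)) := by gcongr
      _ = |a n| * |x - y| := by field_simp
  rw [seriesPrimitive, seriesPrimitive,
    ← (summable_seriesPrimitive ha hx).tsum_sub (summable_seriesPrimitive ha hy)]
  exact (tsum_of_norm_bounded (ha.mul_right _).hasSum hterm).trans_eq tsum_mul_right

lemma isBigO_seriesPrimitive_sub (ha : Summable fun n => |a n|) {α : Type*} {l : Filter α}
    {f g : α → ℝ} (hf : ∀ᶠ t in l, |f t| ≤ 1) (hg : ∀ᶠ t in l, |g t| ≤ 1) :
    (fun t => seriesPrimitive a (f t) - seriesPrimitive a (g t)) =O[l] fun t => f t - g t :=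
  .of_bound _ <| (hf.and hg).mono fun _ ht => abs_seriesPrimitive_sub_le ha ht.1 ht.2

lemma integral_tsum_mul_pow_div_self (b : ℕ → ℝ) (hb : Summable fun n => |b (n + 1)|) {x y : ℝ}
    (hx : x ∈ Ioo 0 1) (hy : y ∈ Ioo 0 1) :
    ∫ w in x..y, (∑' k, b k * w ^ k) / w
      = b 0 * (log y - log x)
        + (seriesPrimitive (fun n => b (n + 1)) y - seriesPrimitive (fun n => b (n + 1)) x) := by
  have hsub : uIcc x y ⊆ Ioo 0 1 := ordConnected_Ioo.uIcc_subset hx hy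
  have hunit : Ioo (0 : ℝ) 1 ⊆ Icc (-1) 1 :=
    Ioo_subset_Icc_self.trans (Icc_subset_Icc (by norm_num) le_rfl)
  have hsplit : EqOn (fun w => (∑' k, b k * w ^ k) / w)
      (fun w => b 0 * w⁻¹ + ∑' n, b (n + 1) * w ^ n) (uIcc x y) := by
    intro w hw
    have hw := hsub hw
    have hsum : Summable fun k => b k * w ^ k := (summable_nat_add_iff 1).mp <|
      hb.of_norm_bounded fun n => abs_mul_pow_le_abs (abs_le.2 (hunit hw)) (n + 1)
    have hshift : ∑' n, b (n + 1) * w ^ (n + 1) = w * ∑' n, b (n + 1) * w ^ n := by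
      rw [← tsum_mul_left]
      exact tsum_congr fun n => by ring
    have : w ≠ 0 := hw.1.ne'
    simp only
    rw [hsum.tsum_eq_zero_add, hshift, pow_zero, mul_one]
    field_simp
  rw [intervalIntegral.integral_congr hsplit,
    intervalIntegral.integral_eq_sub_of_hasDerivAt
      (f := fun w => b 0 * log w + seriesPrimitive (fun n => b (n + 1)) w)]
  · ring
  · intro w hw
    have hw := hsub hw
    exact ((hasDerivAt_log hw.1.ne').const_mul _).add
      (hasDerivAt_seriesPrimitive hb ⟨by linarith [hw.1], hw.2⟩)
  · refine (ContinuousOn.add ?_ ((continuousOn_tsum_mul_pow hb).mono (hsub.trans hunit)))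
      |>.intervalIntegrable
    exact continuousOn_const.mul (continuousOn_inv₀.mono fun w hw => (hsub hw).1.ne')

end PowerSeries

noncomputable def u1Coeff (q : ℝ) (k : ℕ) : ℝ :=
  if k = 0 then 1 / (q + 1)
  else -q * Real.Gamma ((k : ℝ) + 1) * Real.Gamma (q + 1) / Real.Gamma (q + (k : ℝ) + 2)

section Coefficients

variable {q : ℝ}

lemma u1Coeff_succ (n : ℕ) : u1Coeff q (n + 1) = -q * realBeta (2 + n) (q + 1) := by
  rw [u1Coeff, if_neg n.succ_ne_zero, realBeta]
  push_cast
  rw [show (n : ℝ) + 1 + 1 = 2 + n by ring, show q + (n + 1) + 2 = 2 + n + (q + 1) by ring]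
  ring

lemma u1Coeff_succ_div (hq : 0 < q) (n : ℕ) :
    u1Coeff q (n + 1) / (n + 1) = -q / (q + 1) * realBeta (1 + n) (q + 2) := by
  have h2n : Gamma (2 + n) = (1 + n) * Gamma (1 + n) := by
    rw [show (2 : ℝ) + n = 1 + n + 1 by ring, Gamma_add_one (by positivity)]
  have h2q : Gamma (q + 2) = (q + 1) * Gamma (q + 1) := by
    rw [show q + 2 = q + 1 + 1 by ring, Gamma_add_one (by positivity)]
  have : Gamma (1 + n + (q + 2)) ≠ 0 := by positivity
  rw [u1Coeff_succ, realBeta, realBeta, h2n, h2q, show 2 + n + (q + 1) = 1 + n + (q + 2) by ring]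
  field_simp
  ring

lemma summable_abs_u1Coeff_succ (hq : 0 < q) : Summable fun n => |u1Coeff q (n + 1)| :=
  ((summable_realBeta_add_nat two_pos hq).mul_left q).congr fun n => by
    rw [u1Coeff_succ, abs_mul, abs_neg, abs_of_pos hq,
      abs_of_pos (realBeta_pos (by positivity) (by positivity))]

lemma seriesPrimitive_u1Coeff_one (hq : 0 < q) :
    seriesPrimitive (fun n => u1Coeff q (n + 1)) 1 = -q / (q + 1) ^ 2 := by
  have hbeta : realBeta 1 (q + 1) = 1 / (q + 1) := by
    have : Gamma (q + 1) ≠ 0 := by positivity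
    rw [realBeta, Gamma_one, show 1 + (q + 1) = q + 1 + 1 by ring,
      Gamma_add_one (s := q + 1) (by positivity)]
    field_simp
  simp only [seriesPrimitive, one_pow, mul_one, u1Coeff_succ_div hq, tsum_mul_left,
    (hasSum_realBeta_add_nat one_pos hq).tsum_eq, hbeta]
  field_simp

end Coefficients

lemma isBigO_log_one_sub : (fun h : ℝ => log (1 - h)) =O[𝓝 0] fun h => h := by
  simpa using (((hasDerivAt_id (0 : ℝ)).const_sub 1).log (by norm_num)).isBigO_sub

lemma integral_u1_eq {q : ℝ} (hq : 0 < q) {h : ℝ} (hh : h ∈ Ioo 0 1) :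
    ∫ w in h..(1 - h), (q * w * ∑' k, u1Coeff q k * w ^ k) / w ^ 2
      = q / (q + 1) * (log (1 - h) - log h)
        + q * (seriesPrimitive (fun n => u1Coeff q (n + 1)) (1 - h)
          - seriesPrimitive (fun n => u1Coeff q (n + 1)) h) := by
  have hdiv (w : ℝ) : (q * w * ∑' k, u1Coeff q k * w ^ k) / w ^ 2
      = q * ((∑' k, u1Coeff q k * w ^ k) / w) := by
    rcases eq_or_ne w 0 with rfl | hw
    · simp
    · field_simp
  simp only [hdiv, intervalIntegral.integral_const_mul]
  rw [integral_tsum_mul_pow_div_self _ (summable_abs_u1Coeff_succ hq) hh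
    ⟨by linarith [hh.2], by linarith [hh.1]⟩, u1Coeff, if_pos rfl]
  ring

theorem integral_u1_asymptotics (q : ℝ) (hq : 1 < q) :
    (fun h : ℝ =>
        (∫ w in h..(1 - h),
          (q * w * ∑' k : ℕ,
            (if k = 0 then 1 / (q + 1)
              else -q * Real.Gamma ((k : ℝ) + 1) * Real.Gamma (q + 1)
                / Real.Gamma (q + (k : ℝ) + 2)) * w ^ k) / w ^ 2)
          - (-(q / (q + 1)) * Real.log h - q ^ 2 / (q + 1) ^ 2))
      =O[nhdsWithin 0 (Set.Ioi 0)] (fun h : ℝ => h) := by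
  change (fun h : ℝ => (∫ w in h..(1 - h), (q * w * ∑' k, u1Coeff q k * w ^ k) / w ^ 2) - _)
    =O[_] _
  have hq0 : 0 < q := by linarith
  set P := seriesPrimitive fun n => u1Coeff q (n + 1) with hP
  -- `-q² / (q + 1)² = q P 1`, so the error splits into three `O(h)` terms
  have hsmall : ∀ᶠ h in 𝓝[>] (0 : ℝ), h ∈ Ioo 0 1 := Ioo_mem_nhdsGT one_pos
  refine IsBigO.congr' (f₁ := fun h => q / (q + 1) * log (1 - h) - q * (P 1 - P (1 - h))
    - q * (P h - P 0)) ?_ ?_ EventuallyEq.rfl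
  · have hunit : ∀ᶠ h in 𝓝[>] (0 : ℝ), |h| ≤ 1 ∧ |1 - h| ≤ 1 := hsmall.mono fun h hh =>
      ⟨abs_le.2 ⟨by linarith [hh.1], hh.2.le⟩, abs_le.2 ⟨by linarith [hh.2], by linarith [hh.1]⟩⟩
    have hP1 := isBigO_seriesPrimitive_sub (summable_abs_u1Coeff_succ hq0) (f := fun _ => 1)
      (by simp) (hunit.mono fun _ h => h.2)
    have hP0 := isBigO_seriesPrimitive_sub (summable_abs_u1Coeff_succ hq0) (g := fun _ => 0)
      (hunit.mono fun _ h => h.1) (by simp)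
    simp only [sub_sub_cancel, sub_zero] at hP1 hP0
    have hlog := (isBigO_log_one_sub.mono (nhdsWithin_le_nhds (s := Ioi 0))).const_mul_left
      (q / (q + 1))
    exact (hlog.sub (hP1.const_mul_left q)).sub (hP0.const_mul_left q)
  · filter_upwards [hsmall] with h hh
    rw [integral_u1_eq hq0 hh, hP, seriesPrimitive_u1Coeff_one hq0, seriesPrimitive_zero]
    field_simp
    ring
end
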